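/- arXiv:1005.1875 — 6 statements merged into one kernel-verified Lean document; each statement's English description precedes it below -/
import Mathlib

section
/- Let H be a graph with vertex set X and let x ∈ X. Suppose the closed neighborhood Γ*_H(x) of x is the union (not necessarily disjoint) of k cliques c_1,…,c_k of H. Then for any nonnegative reals (μ_y)_{y∈X}, the sum φ*_x(μ) = Σ over independent subsets R of Γ*_H(x) of ∏_{y∈R} μ_y (including R = ∅, contributing 1) satisfies φ*_x(μ) ≤ ∏_{i=1}^k (1 + Σ_{y∈c_i} μ_y). -/
set_option maxHeartbeats 1000000


theorem stmt_0 {X : Type*} [Fintype X] [DecidableEq X]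
    (H : SimpleGraph X) [DecidableRel H.Adj] (x : X)
    (k : ℕ) (c : Fin k → Finset X)
    (hclique : ∀ i, H.IsClique (c i))
    (hcover : insert x (H.neighborFinset x) = Finset.univ.biUnion c)
    (μ : X → ℝ) (hμ : ∀ y, 0 ≤ μ y) :
    ∑ R ∈ (insert x (H.neighborFinset x)).powerset.filter
        (fun R => ∀ a ∈ R, ∀ b ∈ R, a ≠ b → ¬ H.Adj a b),
      ∏ y ∈ R, μ y
      ≤ ∏ i : Fin k, (1 + ∑ y ∈ c i, μ y) := by
  classical
  set N := insert x (H.neighborFinset x) with hN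
  have hxN : x ∈ N := Finset.mem_insert_self _ _
  have hk : 0 < k := by
    by_contra h
    push_neg at h
    interval_cases k
    rw [hcover] at hxN
    simp at hxN
  have hex : ∀ y ∈ N, ∃ i, y ∈ c i := by
    intro y hy
    rw [hcover] at hy
    simpa using hy
  let ι : X → Fin k := fun y => if h : ∃ i, y ∈ c i then h.choose else ⟨0, hk⟩
  have hι : ∀ y ∈ N, y ∈ c (ι y) := by
    intro y hy
    have h := hex y hy
    simp only [ι, dif_pos h]
    exact h.choose_spec
  let f : Option X → ℝ := fun o => o.elim 1 μ
  let t : Fin k → Finset (Option X) := fun i => insert none ((c i).image some)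
  have hRHS : ∏ i : Fin k, (1 + ∑ y ∈ c i, μ y)
      = ∑ g ∈ Fintype.piFinset t, ∏ i, f (g i) := by
    rw [← Finset.prod_univ_sum]
    refine Finset.prod_congr rfl fun i _ => ?_
    rw [Finset.sum_insert (by simp), Finset.sum_image (by simp)]
    rfl
  rw [hRHS]
  set S := (N.powerset.filter (fun R => ∀ a ∈ R, ∀ b ∈ R, a ≠ b → ¬ H.Adj a b)) with hS
  -- properties of members of S
  have hSsub : ∀ R ∈ S, R ⊆ N := fun R hR =>
    Finset.mem_powerset.mp (Finset.mem_filter.mp hR).1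
  have hSind : ∀ R ∈ S, ∀ a ∈ R, ∀ b ∈ R, a ≠ b → ¬ H.Adj a b := fun R hR =>
    (Finset.mem_filter.mp hR).2
  have hinj : ∀ R ∈ S, Set.InjOn ι R := by
    intro R hR a ha b hb hab
    by_contra hne
    have hac : a ∈ c (ι a) := hι a (hSsub R hR ha)
    have hbc : b ∈ c (ι a) := hab ▸ hι b (hSsub R hR hb)
    exact hSind R hR a ha b hb hne (hclique (ι a) hac hbc hne)
  let e : Finset X → (Fin k → Option X) := fun R i =>
    if h : ∃ y ∈ R, ι y = i then some h.choose else none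
  have he_some : ∀ R i y, e R i = some y → y ∈ R ∧ ι y = i := by
    intro R i y hy
    simp only [e] at hy
    split at hy
    · next h =>
      obtain ⟨h1, h2⟩ := h.choose_spec
      cases hy
      exact ⟨h1, h2⟩
    · exact absurd hy (by simp)
  have he_val : ∀ R ∈ S, ∀ y ∈ R, e R (ι y) = some y := by
    intro R hR y hy
    have h : ∃ z ∈ R, ι z = ι y := ⟨y, hy, rfl⟩
    simp only [e, dif_pos h]
    obtain ⟨h1, h2⟩ := h.choose_spec
    exact congrArg some (hinj R hR h1 hy h2)
  -- injectivity of e on S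
  have heinj : Set.InjOn e S := by
    intro R hR R' hR' hEq
    ext y
    constructor
    · intro hy
      have := (he_val R hR y hy).symm.trans (congrFun hEq (ι y))
      exact (he_some R' (ι y) y this.symm).1
    · intro hy
      have := (he_val R' hR' y hy).symm.trans (congrFun hEq.symm (ι y))
      exact (he_some R (ι y) y this.symm).1
  -- weight equality
  have hweight : ∀ R ∈ S, ∏ y ∈ R, μ y = ∏ i, f (e R i) := by
    intro R hR
    have h1 : ∏ i, f (e R i) = ∏ i ∈ R.image ι, f (e R i) := by
      refine (Finset.prod_subset (Finset.subset_univ _) ?_).symm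
      intro i _ hi
      have hnone : e R i = none := by
        simp only [e]
        rw [dif_neg]
        rintro ⟨y, hy, rfl⟩
        exact hi (Finset.mem_image_of_mem ι hy)
      rw [hnone]
      rfl
    rw [h1, Finset.prod_image (fun a ha b hb => hinj R hR ha hb)]
    refine Finset.prod_congr rfl fun y hy => ?_
    rw [he_val R hR y hy]
    rfl
  -- membership of image
  have hemem : ∀ R ∈ S, e R ∈ Fintype.piFinset t := by
    intro R hR
    rw [Fintype.mem_piFinset]
    intro i
    rcases h : e R i with _ | y
    · simp [t]
    · obtain ⟨hy, rfl⟩ := he_some R i y h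
      simp only [t, Finset.mem_insert, Finset.mem_image]
      exact Or.inr ⟨y, hι y (hSsub R hR hy), rfl⟩
  calc ∑ R ∈ S, ∏ y ∈ R, μ y = ∑ R ∈ S, ∏ i, f (e R i) :=
        Finset.sum_congr rfl hweight
    _ = ∑ g ∈ S.image e, ∏ i, f (g i) := (Finset.sum_image (f := fun g => ∏ i, f (g i)) (fun a ha b hb => heinj ha hb)).symm
    _ ≤ ∑ g ∈ Fintype.piFinset t, ∏ i, f (g i) := by
        refine Finset.sum_le_sum_of_subset_of_nonneg ?_ ?_
        · intro g hg
          obtain ⟨R, hR, rfl⟩ := Finset.mem_image.mp hg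
          exact hemem R hR
        · intro g _ _
          refine Finset.prod_nonneg fun i _ => ?_
          rcases g i with _ | y
          · exact zero_le_one
          · exact hμ y
end

section
/- For every real number w with 0 ≤ w ≤ 1/2 and every integer k ≥ 2, (1−w)^{2k} + 2·w^k·(1−w)^k ≤ 1/(1+w)^{2k}. -/
/-!
Multiplying by `(1 + w) ^ (2 * k)` turns the claim into `x ^ (2 * k) + 2 * x ^ k * y ^ k ≤ 1`
for `x = 1 - w ^ 2` and `y = w * (1 + w)`. Both lie in `[0, 1]` when `0 ≤ w ≤ 1 / 2`, so the
left side decreases in `k` and it suffices to check the polynomial inequality at `k = 2`.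
-/

theorem sq_pow_add_two_mul_pow_mul_pow_le {x y : ℝ} (hx0 : 0 ≤ x) (hx1 : x ≤ 1)
    (hy0 : 0 ≤ y) (hy1 : y ≤ 1) {m k : ℕ} (hmk : m ≤ k) :
    (x ^ k) ^ 2 + 2 * x ^ k * y ^ k ≤ (x ^ m) ^ 2 + 2 * x ^ m * y ^ m := by
  have hx : x ^ k ≤ x ^ m := pow_le_pow_of_le_one hx0 hx1 hmk
  have hy : y ^ k ≤ y ^ m := pow_le_pow_of_le_one hy0 hy1 hmk
  have hxk : 0 ≤ x ^ k := pow_nonneg hx0 k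
  have hyk : 0 ≤ y ^ k := pow_nonneg hy0 k
  gcongr

theorem one_sub_sq_pow_four_add_le_one {w : ℝ} (hw0 : 0 ≤ w) (hw : w ≤ 1 / 2) :
    ((1 - w ^ 2) ^ 2) ^ 2 + 2 * (1 - w ^ 2) ^ 2 * (w * (1 + w)) ^ 2 ≤ 1 := by
  have h : 0 ≤ 1 - 2 * w := by linarith
  nlinarith [mul_nonneg hw0 h, mul_nonneg (pow_nonneg hw0 3) h, pow_nonneg hw0 4]

theorem stmt_1 (w : ℝ) (hw0 : 0 ≤ w) (hw : w ≤ 1/2) (k : ℕ) (hk : 2 ≤ k) :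
    (1 - w)^(2*k) + 2 * w^k * (1 - w)^k ≤ 1 / (1 + w)^(2*k) := by
  rw [le_div_iff₀ (by positivity)]
  have hscale : ((1 - w)^(2*k) + 2 * w^k * (1 - w)^k) * (1 + w)^(2*k)
      = ((1 - w ^ 2) ^ k) ^ 2 + 2 * (1 - w ^ 2) ^ k * (w * (1 + w)) ^ k := by
    rw [show 1 - w ^ 2 = (1 - w) * (1 + w) by ring, mul_pow, mul_pow, mul_pow]
    ring
  rw [hscale]
  calc _ ≤ ((1 - w ^ 2) ^ 2) ^ 2 + 2 * (1 - w ^ 2) ^ 2 * (w * (1 + w)) ^ 2 :=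
        sq_pow_add_two_mul_pow_mul_pow_le (by nlinarith) (by nlinarith) (by positivity)
          (by nlinarith) hk
    _ ≤ 1 := one_sub_sq_pow_four_add_le_one hw0 hw
end

section
/- For α > 0 and Δ ≥ 1 real, the function α ↦ α/(1 + α/√Δ + 2α²)² attains its maximum on (0,∞) at α₀ = 1/(√6·(√(1 + 1/(24Δ)) + √(1/(24Δ)))), and α₀ ≤ 1/√6. -/
/-!
The derivative of `x / g(x)²` with `g(x) = 1 + d x + c x²` has the sign of `1 - d x - 3 c x²`,
so the maximiser on `[0, ∞)` is the positive root `a` of `3 c a² + d a = 1`; multiplying out,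
`a² g(x)² - a x g(a)²` is then `(x - a)²` times a polynomial with nonnegative coefficients.
For `c = 2` and `d = 1/√Δ = 2√6 √t` with `t = 1/(24Δ)`, that root is `(√(1+t) - √t)/√6`,
which is the stated `α₀`, and `√(1+t) + √t ≥ 1` gives `α₀ ≤ 1/√6`.
-/

open Real Set

theorem isMaxOn_div_sq_quadratic {c d a : ℝ} (hc : 0 ≤ c) (hd : 0 ≤ d) (ha : 0 < a)
    (hcrit : 3 * c * a ^ 2 + d * a = 1) :
    IsMaxOn (fun x : ℝ => x / (1 + d * x + c * x ^ 2) ^ 2) (Ici 0) a := by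
  intro x (hx : 0 ≤ x)
  have hgx : 0 < (1 + d * x + c * x ^ 2) ^ 2 := by positivity
  have hga : 0 < (1 + d * a + c * a ^ 2) ^ 2 := by positivity
  show x / _ ≤ a / _
  rw [div_le_div_iff₀ hgx hga, ← mul_le_mul_iff_of_pos_left ha]
  have hfactor : a * (a * (1 + d * x + c * x ^ 2) ^ 2) - a * (x * (1 + d * a + c * a ^ 2) ^ 2)
      = (x - a) ^ 2 * (c ^ 2 * a ^ 2 * x ^ 2 + (2 * c * a ^ 2 * d + 2 * c ^ 2 * a ^ 3) * x + 1) := by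
    linear_combination ((1 + d * a + c * a ^ 2) * x * (x - a)) * hcrit
  nlinarith [mul_nonneg (sq_nonneg (x - a)) (by positivity :
    0 ≤ c ^ 2 * a ^ 2 * x ^ 2 + (2 * c * a ^ 2 * d + 2 * c ^ 2 * a ^ 3) * x + 1)]

theorem two_mul_sqrt_six_mul_sqrt_one_div (Δ : ℝ) : 2 * √6 * √(1 / (24 * Δ)) = 1 / √Δ := by
  have h24 : 2 * √6 = √24 := by
    rw [show (24 : ℝ) = 2 ^ 2 * 6 by norm_num, sqrt_mul (by norm_num), sqrt_sq (by norm_num)]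
  rw [h24, ← sqrt_mul (by norm_num), show 24 * (1 / (24 * Δ)) = 1 / Δ by field_simp,
    sqrt_div zero_le_one, sqrt_one]

theorem six_mul_sq_add_two_mul_sqrt_six_mul_eq_one {t : ℝ} (ht : 0 ≤ t) :
    6 * (1 / (√6 * (√(1 + t) + √t))) ^ 2 + 2 * √6 * √t * (1 / (√6 * (√(1 + t) + √t)))
      = 1 := by
  have hu : √(1 + t) ^ 2 = 1 + t := sq_sqrt (by linarith)
  have hv : √t ^ 2 = t := sq_sqrt ht
  have h6 : √6 ^ 2 = 6 := sq_sqrt (by norm_num)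
  have hpos : 0 < √6 * (√(1 + t) + √t) := by positivity
  field_simp
  linear_combination (-6) * hu + 6 * hv + (2 * √t * (√(1 + t) + √t) - (√(1 + t) + √t) ^ 2) * h6

theorem one_div_sqrt_six_mul_sqrt_one_add_add_sqrt_le {t : ℝ} (ht : 0 ≤ t) :
    1 / (√6 * (√(1 + t) + √t)) ≤ 1 / √6 := by
  have hone : 1 ≤ √(1 + t) + √t := by
    have := one_le_sqrt.mpr (le_add_of_nonneg_right ht)
    linarith [sqrt_nonneg t]
  gcongr
  exact le_mul_of_one_le_right (sqrt_nonneg 6) hone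

theorem stmt_10 (Δ : ℝ) (hΔ : 1 ≤ Δ) :
    IsMaxOn (fun α : ℝ => α / (1 + α / Real.sqrt Δ + 2*α^2)^2) (Set.Ioi 0)
      (1 / (Real.sqrt 6 * (Real.sqrt (1 + 1/(24*Δ)) + Real.sqrt (1/(24*Δ))))) ∧
    1 / (Real.sqrt 6 * (Real.sqrt (1 + 1/(24*Δ)) + Real.sqrt (1/(24*Δ))))
      ≤ 1 / Real.sqrt 6 := by
  have ht : 0 ≤ 1 / (24 * Δ) := by positivity
  have hfun : (fun α : ℝ => α / (1 + α / √Δ + 2 * α ^ 2) ^ 2)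
      = fun α => α / (1 + 2 * √6 * √(1 / (24 * Δ)) * α + 2 * α ^ 2) ^ 2 := by
    funext α
    rw [two_mul_sqrt_six_mul_sqrt_one_div]
    ring
  refine ⟨?_, one_div_sqrt_six_mul_sqrt_one_add_add_sqrt_le ht⟩
  rw [hfun]
  exact (isMaxOn_div_sq_quadratic zero_le_two (by positivity) (by positivity)
    (by linarith [six_mul_sq_add_two_mul_sqrt_six_mul_eq_one ht])).on_subset Ioi_subset_Ici_self
end

section
/- For each integer β ≥ 2 define k₁(β) = min_{α>0} (1 + α + α^{1+β})²/α. Then k₁ is a nonincreasing function of β on the integers β ≥ 2, and 4 ≤ k₁(β) ≤ 5.27 for all β ≥ 2. -/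
/-!
Since `(1 + α)² ≥ 4α`, every value is at least `4`, and evaluating at `α = 189/400` (where
`α^(1+β) ≤ α³`) gives the upper bound. For monotonicity, raising the exponent decreases the
objective on `(0, 1]`, while on `[1, ∞)` the objective is at least `9`, its value at `α = 1`.
-/

open Set

lemma csInf_image_le_csInf_image {ι α : Type*} [ConditionallyCompleteLattice α]
    {f g : ι → α} {s : Set ι} (hs : s.Nonempty) (hg : BddBelow (g '' s))
    (h : ∀ x ∈ s, ∃ y ∈ s, g y ≤ f x) : sInf (g '' s) ≤ sInf (f '' s) := by
  refine le_csInf (hs.image f) ?_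
  rintro _ ⟨x, hx, rfl⟩
  obtain ⟨y, hy, hyx⟩ := h x hx
  exact (csInf_le hg (mem_image_of_mem g hy)).trans hyx

noncomputable def objective (n : ℕ) (α : ℝ) : ℝ := (1 + α + α ^ n) ^ 2 / α

lemma four_le_objective (n : ℕ) {α : ℝ} (hα : 0 < α) : 4 ≤ objective n α := by
  rw [objective, le_div_iff₀ hα]
  nlinarith [pow_nonneg hα.le n, sq_nonneg (1 - α)]

lemma bddBelow_objective (n : ℕ) : BddBelow (objective n '' Ioi 0) := by
  refine ⟨4, ?_⟩
  rintro _ ⟨α, hα, rfl⟩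
  exact four_le_objective n hα

lemma four_le_sInf_objective (n : ℕ) : 4 ≤ sInf (objective n '' Ioi 0) := by
  refine le_csInf (nonempty_Ioi.image _) ?_
  rintro _ ⟨α, hα, rfl⟩
  exact four_le_objective n hα

lemma objective_one (n : ℕ) : objective n 1 = 9 := by
  norm_num [objective]

lemma nine_le_objective {n : ℕ} (hn : 1 ≤ n) {α : ℝ} (hα : 1 ≤ α) : 9 ≤ objective n α := by
  have hpow : α ≤ α ^ n := le_self_pow₀ hα (by omega)
  rw [objective, le_div_iff₀ (by linarith)]
  nlinarith

lemma objective_succ_le {n : ℕ} {α : ℝ} (hα : 0 < α) (h1 : α ≤ 1) :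
    objective (n + 1) α ≤ objective n α := by
  have hpow : α ^ (n + 1) ≤ α ^ n := pow_le_pow_of_le_one hα.le h1 (Nat.le_succ n)
  unfold objective
  gcongr

lemma exists_objective_succ_le {n : ℕ} (hn : 1 ≤ n) {α : ℝ} (hα : 0 < α) :
    ∃ α' ∈ Ioi 0, objective (n + 1) α' ≤ objective n α := by
  rcases le_or_gt α 1 with h1 | h1
  · exact ⟨α, hα, objective_succ_le hα h1⟩
  · refine ⟨1, mem_Ioi.2 one_pos, ?_⟩
    rw [objective_one]
    exact nine_le_objective hn h1.le

lemma sInf_objective_succ_le {n : ℕ} (hn : 1 ≤ n) :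
    sInf (objective (n + 1) '' Ioi 0) ≤ sInf (objective n '' Ioi 0) :=
  csInf_image_le_csInf_image nonempty_Ioi (bddBelow_objective _)
    fun _ hα => exists_objective_succ_le hn hα

lemma objective_le {n : ℕ} (hn : 3 ≤ n) : objective n (189 / 400) ≤ 5.27 := by
  have hpow : ((189 : ℝ) / 400) ^ n ≤ (189 / 400) ^ 3 :=
    pow_le_pow_of_le_one (by norm_num) (by norm_num) hn
  calc objective n (189 / 400) ≤ objective 3 (189 / 400) := by
        unfold objective
        gcongr
    _ ≤ 5.27 := by norm_num [objective]

lemma sInf_objective_le {n : ℕ} (hn : 3 ≤ n) : sInf (objective n '' Ioi 0) ≤ 5.27 :=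
  (csInf_le (bddBelow_objective n) (mem_image_of_mem _ (by norm_num))).trans (objective_le hn)

/-- `k₁(β) = min_{α>0} (1+α+α^(1+β))²/α` is nonincreasing in `β ≥ 2` and lies
in `[4, 5.27]`. -/
theorem stmt_11 (k₁ : ℕ → ℝ)
    (hk₁ : ∀ β, k₁ β = sInf ((fun α : ℝ => (1 + α + α^(1+β))^2 / α) '' Set.Ioi 0)) :
    ∀ β : ℕ, 2 ≤ β → k₁ (β + 1) ≤ k₁ β ∧ 4 ≤ k₁ β ∧ k₁ β ≤ 5.27 := by
  have hk : ∀ β, k₁ β = sInf (objective (1 + β) '' Ioi 0) := hk₁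
  intro β hβ
  refine ⟨?_, ?_, ?_⟩
  · rw [hk, hk]
    exact sInf_objective_succ_le (n := 1 + β) (by omega)
  · rw [hk]
    exact four_le_sInf_objective _
  · rw [hk]
    exact sInf_objective_le (by omega)
end

section
/- For each integer β ≥ 2 define k₂(β) = (min_{α>0} (1 + α + α^{1+β})/α)^{1+1/β}. Then k₂ is a nonincreasing function of β on the integers β ≥ 2, and 2 ≤ k₂(β) ≤ 4.92 for all β ≥ 2. -/
/-- `k₂(β) = (min_{α>0} (1+α+α^(1+β))/α)^{1+1/β}` is nonincreasing in `β ≥ 2`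
and lies in `[2, 4.92]`. -/
theorem stmt_12 (k₂ : ℕ → ℝ)
    (hk₂ : ∀ β : ℕ, k₂ β =
      (sInf ((fun α : ℝ => (1 + α + α^(1+β)) / α) '' Set.Ioi 0)) ^ ((1:ℝ) + 1/β)) :
    ∀ β : ℕ, 2 ≤ β → k₂ (β + 1) ≤ k₂ β ∧ 2 ≤ k₂ β ∧ k₂ β ≤ 4.92 := by
  set S : ℕ → Set ℝ := fun β => (fun α : ℝ => (1 + α + α^(1+β)) / α) '' Set.Ioi 0 with hS
  have hmem : ∀ β : ℕ, ∀ x ∈ S β, (2:ℝ) ≤ x := by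
    rintro β x ⟨α, hα, rfl⟩
    rw [Set.mem_Ioi] at hα
    show (2:ℝ) ≤ (1 + α + α^(1+β)) / α
    rw [le_div_iff₀ hα]
    rcases le_or_gt α 1 with h | h
    · have h0 : (0:ℝ) ≤ α^(1+β) := by positivity
      nlinarith
    · have h1 : α ≤ α^(1+β) := by
        calc α = α^1 := (pow_one α).symm
          _ ≤ α^(1+β) := pow_le_pow_right₀ h.le (by omega)
      nlinarith
  have hbdd : ∀ β, BddBelow (S β) := fun β => ⟨2, fun x hx => hmem β x hx⟩
  have hne : ∀ β, (S β).Nonempty := fun β => ⟨_, ⟨1, by norm_num, rfl⟩⟩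
  have hm2 : ∀ β, (2:ℝ) ≤ sInf (S β) := fun β => le_csInf (hne β) (hmem β)
  have hmono : ∀ β : ℕ, 1 ≤ β → sInf (S (β+1)) ≤ sInf (S β) := by
    intro β hβ
    apply le_csInf (hne β)
    rintro x ⟨α, hα, rfl⟩
    rw [Set.mem_Ioi] at hα
    show sInf (S (β+1)) ≤ (1 + α + α^(1+β)) / α
    rcases le_or_gt α 1 with h | h
    · calc sInf (S (β+1)) ≤ (1 + α + α^(1+(β+1)))/α :=
            csInf_le (hbdd _) ⟨α, hα, rfl⟩
        _ ≤ (1 + α + α^(1+β))/α := by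
            have : α^(1+(β+1)) ≤ α^(1+β) :=
              pow_le_pow_of_le_one hα.le h (by omega)
            gcongr
    · calc sInf (S (β+1)) ≤ (1 + 1 + (1:ℝ)^(1+(β+1)))/1 :=
            csInf_le (hbdd _) ⟨1, by norm_num, rfl⟩
        _ = 3 := by norm_num
        _ ≤ (1 + α + α^(1+β))/α := by
            rw [le_div_iff₀ hα]
            have h2 : α^2 ≤ α^(1+β) := pow_le_pow_right₀ h.le (by omega)
            nlinarith
  have hstep : ∀ β : ℕ, 2 ≤ β → k₂ (β+1) ≤ k₂ β := by
    intro β hβ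
    rw [hk₂, hk₂]
    have hβR : (0:ℝ) < (β:ℝ) := by
      have : (2:ℝ) ≤ (β:ℝ) := by exact_mod_cast hβ
      linarith
    have he : (1:ℝ) + 1/((β+1:ℕ):ℝ) ≤ 1 + 1/(β:ℝ) := by
      have h1 : 1/((β:ℝ)+1) ≤ 1/(β:ℝ) :=
        one_div_le_one_div_of_le hβR (by linarith)
      push_cast
      linarith
    calc sInf (S (β+1)) ^ ((1:ℝ) + 1/((β+1:ℕ):ℝ))
        ≤ sInf (S β) ^ ((1:ℝ) + 1/((β+1:ℕ):ℝ)) := by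
          apply Real.rpow_le_rpow (by linarith [hm2 (β+1)]) (hmono β (by omega))
          positivity
      _ ≤ sInf (S β) ^ ((1:ℝ) + 1/(β:ℝ)) :=
          Real.rpow_le_rpow_of_exponent_le (by linarith [hm2 β]) he
  have h2bound : k₂ 2 ≤ 4.92 := by
    rw [hk₂]
    have hle : sInf (S 2) ≤ 2.89 := by
      calc sInf (S 2) ≤ (1 + 0.8 + (0.8:ℝ)^(1+2)) / 0.8 :=
            csInf_le (hbdd 2) ⟨0.8, by norm_num, rfl⟩
        _ = 2.89 := by norm_num
    have h0 : (0:ℝ) ≤ sInf (S 2) := by linarith [hm2 2]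
    have e : (1:ℝ) + 1/((2:ℕ):ℝ) = 3/2 := by norm_num
    rw [e]
    have key : (2.89:ℝ)^((3:ℝ)/2) ≤ 4.92 := by
      have h1 : ((2.89:ℝ)^((3:ℝ)/2))^(2:ℕ) = 2.89^(3:ℕ) := by
        rw [← Real.rpow_natCast ((2.89:ℝ)^((3:ℝ)/2)) 2,
          ← Real.rpow_mul (by norm_num : (0:ℝ) ≤ 2.89)]
        rw [show ((3:ℝ)/2) * ((2:ℕ):ℝ) = ((3:ℕ):ℝ) by push_cast; ring]
        rw [Real.rpow_natCast]
      nlinarith [Real.rpow_nonneg (by norm_num : (0:ℝ) ≤ 2.89) ((3:ℝ)/2)]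
    calc sInf (S 2) ^ ((3:ℝ)/2) ≤ (2.89:ℝ) ^ ((3:ℝ)/2) :=
          Real.rpow_le_rpow h0 hle (by norm_num)
      _ ≤ 4.92 := key
  have hub : ∀ β : ℕ, 2 ≤ β → k₂ β ≤ 4.92 := by
    intro β hβ
    induction β, hβ using Nat.le_induction with
    | base => exact h2bound
    | succ n hn ih => exact le_trans (hstep n hn) ih
  intro β hβ
  refine ⟨hstep β hβ, ?_, hub β hβ⟩
  rw [hk₂]
  have h1 : (1:ℝ) ≤ sInf (S β) := by linarith [hm2 β]
  have he : (1:ℝ) ≤ 1 + 1/(β:ℝ) := by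
    have : (0:ℝ) ≤ 1/(β:ℝ) := by positivity
    linarith
  calc (2:ℝ) ≤ sInf (S β) := hm2 β
    _ = sInf (S β) ^ (1:ℝ) := (Real.rpow_one _).symm
    _ ≤ sInf (S β) ^ ((1:ℝ) + 1/(β:ℝ)) :=
        Real.rpow_le_rpow_of_exponent_le h1 he
end

section
/- Let G be a finite simple graph with maximum degree Δ, and suppose the edges of G are colored with N colors so that (1) at every vertex each color appears on at most η incident edges, (2) there is no properly bichromatic cycle, and (3) there is no monochromatic cycle. Then G admits a proper acyclic edge coloring with ηN colors (a proper edge coloring with no properly bichromatic cycle). -/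
/-! Each color class of `c` is a forest of maximum degree at most `η`, so it has a proper edge
coloring `d` with `η` colors: remove a leaf edge, color the rest, and give the leaf edge a color
missing from the at most `η - 1` edges it meets. The pair `(d e, c e)` is then a proper edge
coloring with `η N` colors, and a properly bichromatic cycle for it would project under `c` to a
monochromatic or a properly bichromatic cycle of `c`. -/

open Finset

namespace SimpleGraph

variable {V α : Type*} (G : SimpleGraph V)

def IsProperEdgeColoring (d : Sym2 V → α) : Prop :=
  ∀ e₁ ∈ G.edgeSet, ∀ e₂ ∈ G.edgeSet, e₁ ≠ e₂ → (∃ v : V, v ∈ e₁ ∧ v ∈ e₂) → d e₁ ≠ d e₂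

def HasMonochromaticCycle (c : Sym2 V → α) : Prop :=
  ∃ (v : V) (w : G.Walk v v), w.IsCycle ∧ ∃ a : α, ∀ f ∈ w.edges, c f = a

def HasBichromaticCycle (c : Sym2 V → α) : Prop :=
  ∃ (v : V) (w : G.Walk v v), w.IsCycle ∧
    ∃ a b : α, a ≠ b ∧ ∀ (i : ℕ) (hi : i < w.edges.length),
      c (w.edges.get ⟨i, hi⟩) = if i % 2 = 0 then a else b

def colorClass (c : Sym2 V → α) (a : α) : SimpleGraph V :=
  G.deleteEdges {e | c e ≠ a}

variable {G}

theorem IsProperEdgeColoring.comp {β : Type*} {d : Sym2 V → α} (hd : G.IsProperEdgeColoring d)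
    {f : α → β} (hf : Function.Injective f) : G.IsProperEdgeColoring (f ∘ d) :=
  fun e₁ he₁ e₂ he₂ hne hsh => hf.ne (hd e₁ he₁ e₂ he₂ hne hsh)

theorem IsProperEdgeColoring.update_of_deleteEdges [DecidableEq V] {d : Sym2 V → α}
    {e : Sym2 V} {a : α}
    (hd : (G.deleteEdges {e}).IsProperEdgeColoring d)
    (ha : ∀ f ∈ G.edgeSet, f ≠ e → (∃ v : V, v ∈ f ∧ v ∈ e) → d f ≠ a) :
    G.IsProperEdgeColoring (Function.update d e a) := by
  have hdel : ∀ f ∈ G.edgeSet, f ≠ e → f ∈ (G.deleteEdges {e}).edgeSet := fun f hf hfe => by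
    simpa [edgeSet_deleteEdges] using ⟨hf, hfe⟩
  intro e₁ he₁ e₂ he₂ hne hsh
  rcases eq_or_ne e₁ e with rfl | h₁ <;> rcases eq_or_ne e₂ e₁ with rfl | h₂
  · exact absurd rfl hne
  · rw [Function.update_self, Function.update_of_ne h₂]
    exact (ha e₂ he₂ h₂ (hsh.imp fun _ => And.symm)).symm
  · exact absurd rfl hne
  · rcases eq_or_ne e₂ e with rfl | h₃
    · rw [Function.update_self, Function.update_of_ne h₁]
      exact ha e₁ he₁ h₁ hsh
    · rw [Function.update_of_ne h₁, Function.update_of_ne h₃]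
      exact hd e₁ (hdel e₁ he₁ h₁) e₂ (hdel e₂ he₂ h₃) hne hsh

theorem mem_incidenceSet_of_forall_adj_eq {v w : V} (hw : ∀ x, G.Adj v x → x = w)
    {f : Sym2 V} (hf : f ∈ G.edgeSet) (hfe : f ≠ s(v, w)) (hsh : ∃ z, z ∈ f ∧ z ∈ s(v, w)) :
    f ∈ G.incidenceSet w := by
  obtain ⟨z, hzf, hz⟩ := hsh
  rcases Sym2.mem_iff.mp hz with rfl | rfl
  · rw [← Sym2.other_spec hzf] at hf hfe
    exact absurd (congrArg _ (hw _ hf)) hfe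
  · exact ⟨hf, hzf⟩

theorem IsAcyclic.exists_forall_adj_eq [Finite V] (hG : G.IsAcyclic) {u₀ w₀ : V}
    (h₀ : G.Adj u₀ w₀) : ∃ v w, G.Adj v w ∧ ∀ x, G.Adj v x → x = w := by
  -- the start of a longest path is a leaf
  have : Nonempty V := ⟨u₀⟩
  obtain ⟨u, v, p, hp, hmax⟩ := Walk.exists_isPath_forall_isPath_length_le_length G
  have hnil : ¬p.Nil := fun hnil => by
    simpa [hnil.length_eq_zero] using hmax _ _ _ (Path.singleton h₀).2
  refine ⟨u, p.snd, p.adj_snd hnil, fun x hx => ?_⟩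
  by_cases hxp : x ∈ p.support
  · exact hG.eq_snd_of_adj_start hp hx hxp
  · simpa using hmax _ _ _ (hp.cons hxp : (Walk.cons hx.symm p).IsPath)

theorem IsAcyclic.exists_isProperEdgeColoring [Fintype V] [DecidableRel G.Adj]
    (hG : G.IsAcyclic) {k : ℕ} (hk : 0 < k) (hdeg : ∀ v, G.degree v ≤ k) :
    ∃ d : Sym2 V → Fin k, G.IsProperEdgeColoring d := by
  classical
  induction hn : #G.edgeFinset generalizing G with
  | zero =>
    refine ⟨fun _ => ⟨0, hk⟩, fun e he => ?_⟩
    simp [← mem_edgeFinset, card_eq_zero.mp hn] at he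
  | succ n ih =>
    obtain ⟨⟨u₀, w₀⟩, he⟩ := card_pos.mp (by rw [hn]; exact n.succ_pos)
    obtain ⟨v, w, hvw, hw⟩ := hG.exists_forall_adj_eq (mem_edgeFinset.mp he)
    have hle : G.deleteEdges {s(v, w)} ≤ G := deleteEdges_le _
    have hcard : #(G.deleteEdges {s(v, w)}).edgeFinset = n := by
      have : (G.deleteEdges {s(v, w)}).edgeFinset = G.edgeFinset.erase s(v, w) := by
        ext; simp [and_comm]
      rw [this, card_erase_of_mem (mem_edgeFinset.mpr hvw), hn, Nat.add_sub_cancel]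
    obtain ⟨d, hd⟩ := ih (hG.anti hle) (fun x => (degree_le_of_le hle).trans (hdeg x)) hcard
    have hfree : #(((G.incidenceFinset w).erase s(v, w)).image d) < #(univ : Finset (Fin k)) := by
      calc #(((G.incidenceFinset w).erase s(v, w)).image d)
          ≤ #((G.incidenceFinset w).erase s(v, w)) := card_image_le
        _ = G.degree w - 1 := by
          rw [card_erase_of_mem ((mem_incidenceFinset _ _ _).mpr ⟨hvw, Sym2.mem_mk_right v w⟩),
            card_incidenceFinset_eq_degree]
        _ < k := by
          have := (G.degree_pos_iff_exists_adj w).mpr ⟨v, hvw.symm⟩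
          have := hdeg w
          omega
        _ = #(univ : Finset (Fin k)) := (card_fin k).symm
    obtain ⟨a, -, ha⟩ := exists_mem_notMem_of_card_lt_card hfree
    refine ⟨Function.update d s(v, w) a, hd.update_of_deleteEdges fun f hf hfe hsh hfa => ha ?_⟩
    exact mem_image.mpr ⟨f, mem_erase.mpr ⟨hfe, (mem_incidenceFinset _ _ _).mpr
      (mem_incidenceSet_of_forall_adj_eq hw hf hfe hsh)⟩, hfa⟩

theorem mem_edgeSet_colorClass {c : Sym2 V → α} {a : α} {e : Sym2 V} :
    e ∈ (G.colorClass c a).edgeSet ↔ e ∈ G.edgeSet ∧ c e = a := by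
  simp [colorClass]

theorem colorClass_le (c : Sym2 V → α) (a : α) : G.colorClass c a ≤ G :=
  deleteEdges_le _

theorem isAcyclic_colorClass {c : Sym2 V → α} (hc : ¬G.HasMonochromaticCycle c) (a : α) :
    (G.colorClass c a).IsAcyclic := fun v w hw =>
  hc ⟨v, w.mapLe (colorClass_le c a), hw.mapLe _, a, fun f hf => by
    rw [Walk.edges_mapLe_eq_edges] at hf
    exact (mem_edgeSet_colorClass.mp (w.edges_subset_edgeSet hf)).2⟩

theorem degree_colorClass [Fintype V] [DecidableEq V] [DecidableRel G.Adj] [DecidableEq α]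
    (c : Sym2 V → α) (a : α) (v : V) [Fintype ((G.colorClass c a).neighborSet v)] :
    (G.colorClass c a).degree v = #((G.incidenceFinset v).filter (c · = a)) := by
  rw [← card_incidenceFinset_eq_degree]
  congr 1
  ext e
  simp [mem_incidenceFinset, incidenceSet, mem_edgeSet_colorClass, and_right_comm]

theorem isProperEdgeColoring_of_colorClass {β : Type*} {c : Sym2 V → α} {d : α → Sym2 V → β}
    (hd : ∀ a, (G.colorClass c a).IsProperEdgeColoring (d a)) :
    G.IsProperEdgeColoring fun e => (d (c e) e, c e) := by
  intro e₁ he₁ e₂ he₂ hne hsh heq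
  obtain ⟨hde, hce⟩ := Prod.mk.inj heq
  exact hd (c e₁) e₁ (mem_edgeSet_colorClass.mpr ⟨he₁, rfl⟩) e₂
    (mem_edgeSet_colorClass.mpr ⟨he₂, hce.symm⟩) hne hsh (hde.trans (by rw [hce]))

theorem not_hasBichromaticCycle_of_comp {β : Type*} {c : Sym2 V → α} {f : α → β}
    (hmono : ¬G.HasMonochromaticCycle (f ∘ c)) (hbi : ¬G.HasBichromaticCycle (f ∘ c)) :
    ¬G.HasBichromaticCycle c := by
  rintro ⟨v, w, hw, a, b, -, halt⟩
  have hfalt : ∀ (i : ℕ) (hi : i < w.edges.length),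
      (f ∘ c) (w.edges.get ⟨i, hi⟩) = if i % 2 = 0 then f a else f b := fun i hi => by
    rw [Function.comp_apply, halt, apply_ite f]
  by_cases hab : f a = f b
  · refine hmono ⟨v, w, hw, f a, fun e he => ?_⟩
    obtain ⟨⟨i, hi⟩, rfl⟩ := List.mem_iff_get.mp he
    rw [hfalt]
    split_ifs <;> simp [hab]
  · exact hbi ⟨v, w, hw, f a, f b, hab, hfalt⟩

end SimpleGraph

/-- If the edges of `G` are colored with `N` colors so that (1) each color
appears at most `η` times among the edges incident to any vertex, (2) there is
no properly bichromatic (alternating two-colored) cycle, and (3) there is no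
monochromatic cycle, then `G` has a proper acyclic edge coloring with `η·N`
colors. -/
theorem stmt_14 {V : Type*} [Fintype V] [DecidableEq V]
    (G : SimpleGraph V) [DecidableRel G.Adj]
    (N η : ℕ) (hη : 2 ≤ η) (c : Sym2 V → Fin N)
    (h1 : ∀ (v : V) (col : Fin N),
      ((G.incidenceFinset v).filter (fun f => c f = col)).card ≤ η)
    (h2 : ¬ ∃ (v : V) (w : G.Walk v v), w.IsCycle ∧
      ∃ a b : Fin N, a ≠ b ∧ ∀ (i : ℕ) (hi : i < w.edges.length),
        c (w.edges.get ⟨i, hi⟩) = if i % 2 = 0 then a else b)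
    (h3 : ¬ ∃ (v : V) (w : G.Walk v v), w.IsCycle ∧
      ∃ a : Fin N, ∀ f ∈ w.edges, c f = a) :
    ∃ c' : Sym2 V → Fin (η * N),
      (∀ e₁ ∈ G.edgeSet, ∀ e₂ ∈ G.edgeSet, e₁ ≠ e₂ →
        (∃ v : V, v ∈ e₁ ∧ v ∈ e₂) → c' e₁ ≠ c' e₂) ∧
      ¬ ∃ (v : V) (w : G.Walk v v), w.IsCycle ∧
        ∃ a b : Fin (η * N), a ≠ b ∧ ∀ (i : ℕ) (hi : i < w.edges.length),
          c' (w.edges.get ⟨i, hi⟩) = if i % 2 = 0 then a else b := by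
  classical
  have hclass : ∀ a, ∃ d : Sym2 V → Fin η, (G.colorClass c a).IsProperEdgeColoring d :=
    fun a => (G.isAcyclic_colorClass h3 a).exists_isProperEdgeColoring (by omega)
      fun v => (G.degree_colorClass c a v).trans_le (h1 v a)
  choose d hd using hclass
  let c' := finProdFinEquiv ∘ fun e => (d (c e) e, c e)
  have hc : (Prod.snd ∘ finProdFinEquiv.symm) ∘ c' = c := by
    funext e
    simp [c']
  refine ⟨c', (G.isProperEdgeColoring_of_colorClass hd).comp finProdFinEquiv.injective, ?_⟩
  exact G.not_hasBichromaticCycle_of_comp (by rwa [hc]) (by rwa [hc])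
end
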